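/- Main recurrence (Theorem 4): Let T_{k,ℓ}(u) = det_{k×k}(g_{2i−j+ℓ}(u)), where g_m(u) = Σ_{j≥0, m+2j≥0} u^j/(j!(m+2j)!) and T_{0,ℓ} := 1. Then for every integer k ≥ 1 and ℓ ∈ ℤ and all u ∈ ℂ: T_{k+1,ℓ}(u)·T_{k−1,ℓ}(u) = 2( u·T_{k,ℓ}(u)·T_{k,ℓ}''(u) + T_{k,ℓ}(u)·T_{k,ℓ}'(u) − u·(T_{k,ℓ}'(u))² ). -/

import Mathlib

open scoped Nat

/-- The entire function `g_m(u) = Σ_{j ≥ 0, m+2j ≥ 0} u^j / (j! (m+2j)!)`. -/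
noncomputable def gFun (m : ℤ) (u : ℂ) : ℂ :=
  ∑' j : ℕ, if 0 ≤ m + 2 * (j : ℤ) then
    u ^ j / ((j ! : ℂ) * ((m + 2 * (j : ℤ)).toNat ! : ℂ)) else 0

/-- `T_{k,ℓ}(u) = det_{k×k}(g_{2i−j+ℓ}(u))` with `i, j ∈ {1, …, k}` (0-based indices,
so the `(i,j)` entry is `g_{2i−j+1+ℓ}`), and `T_{0,ℓ} = 1` (the empty determinant). -/
noncomputable def tauT (k : ℕ) (ℓ : ℤ) (u : ℂ) : ℂ :=
  Matrix.det (Matrix.of fun i j : Fin k => gFun (2 * (i : ℤ) - (j : ℤ) + 1 + ℓ) u)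

/-!
Write `G(r, c)` for the matrix `[g_{2 r_i - c_j + 1 + ℓ}]` with integer row and column labels.
Since `g_m' = g_{m+2}`, raising one row label by one differentiates that row, so by Jacobi's
formula `T'` is a sum of such determinants; all but the one raising the last label have two equal
rows. Hence `T' = R`, the minor of `T_{k+1,ℓ}` on rows `0, …, k-2, k` and columns `0, …, k-1`.
Raising a column label lowers the index instead, and the three-term relation
`g_{m-1} = m g_m + 2u g_{m+2}` with `m = 2 r_i + (1 + ℓ - c_j)` turns the minor `Q` on rows
`0, …, k-1` and columns `0, …, k-2, k` into `γ T + 2u T'`, because `tr (adj A · D A) = tr D · det A`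
for diagonal `D`. Differentiating `Q` gives the minor `P` with both kinds of labels bumped:
`P = (γ + 2) T' + 2u T''`. The Desnanot–Jacobi identity for the last two rows and columns of
`T_{k+1,ℓ}` reads `P T - R Q = T_{k+1,ℓ} T_{k-1,ℓ}`, which is the recurrence.
-/

open Matrix

section PowerSeries

variable {a : ℕ → ℂ}

theorem summable_mul_pow_of_norm_le_inv_factorial (ha : ∀ j, ‖a j‖ ≤ (j ! : ℝ)⁻¹) (z : ℂ) :
    Summable fun j => a j * z ^ j := by
  refine .of_norm_bounded (Real.summable_pow_div_factorial ‖z‖) fun j => ?_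
  rw [norm_mul, norm_pow, div_eq_inv_mul]
  gcongr
  exact ha j

theorem summable_mul_pow_pred_div_factorial (R : ℝ) :
    Summable fun j : ℕ => j * R ^ (j - 1) / (j ! : ℝ) := by
  rw [← summable_nat_add_iff 1]
  refine (Real.summable_pow_div_factorial R).congr fun j => ?_
  rw [Nat.factorial_succ, Nat.add_sub_cancel]
  push_cast
  field_simp

theorem hasDerivAt_tsum_mul_pow (ha : ∀ j, ‖a j‖ ≤ (j ! : ℝ)⁻¹) (z : ℂ) :
    HasDerivAt (fun w => ∑' j, a j * w ^ j) (∑' j, (j + 1) * a (j + 1) * z ^ j) z := by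
  set R := ‖z‖ + 1
  have hz : z ∈ Metric.ball (0 : ℂ) R := by simp [R]
  have hbound : ∀ j (w : ℂ), w ∈ Metric.ball (0 : ℂ) R →
      ‖a j * (j * w ^ (j - 1))‖ ≤ j * R ^ (j - 1) / (j ! : ℝ) := by
    intro j w hw
    rw [mem_ball_zero_iff] at hw
    rw [norm_mul, norm_mul, norm_pow, Complex.norm_natCast, div_eq_inv_mul]
    gcongr
    exact ha j
  have hderiv := hasDerivAt_tsum_of_isPreconnected (summable_mul_pow_pred_div_factorial R)
    Metric.isOpen_ball (convex_ball 0 R).isPreconnected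
    (fun j w _ => (hasDerivAt_pow j w).const_mul (a j)) hbound hz
    (summable_mul_pow_of_norm_le_inv_factorial ha z) hz
  refine hderiv.congr_deriv ?_
  rw [(Summable.of_norm_bounded (summable_mul_pow_pred_div_factorial R) fun j =>
    hbound j z hz).tsum_eq_zero_add]
  simp only [Nat.cast_zero, zero_mul, mul_zero, zero_add, Nat.add_sub_cancel, Nat.cast_add,
    Nat.cast_one]
  exact tsum_congr fun j => by ring

end PowerSeries

section GFun

noncomputable def gCoeff (m : ℤ) (j : ℕ) : ℂ :=
  if 0 ≤ m + 2 * (j : ℤ) then ((j ! : ℂ) * ((m + 2 * (j : ℤ)).toNat ! : ℂ))⁻¹ else 0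

theorem norm_gCoeff_le (m : ℤ) (j : ℕ) : ‖gCoeff m j‖ ≤ (j ! : ℝ)⁻¹ := by
  unfold gCoeff
  split_ifs
  · rw [norm_inv, norm_mul, Complex.norm_natCast, Complex.norm_natCast]
    gcongr
    exact le_mul_of_one_le_right (by positivity)
      (by exact_mod_cast Nat.one_le_of_lt (Nat.factorial_pos _))
  · simp

theorem gFun_eq_tsum (m : ℤ) (u : ℂ) : gFun m u = ∑' j, gCoeff m j * u ^ j := by
  refine tsum_congr fun j => ?_
  unfold gCoeff
  split_ifs <;> simp [div_eq_inv_mul]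

theorem hasSum_gCoeff_mul_pow (m : ℤ) (u : ℂ) :
    HasSum (fun j => gCoeff m j * u ^ j) (gFun m u) :=
  gFun_eq_tsum m u ▸ (summable_mul_pow_of_norm_le_inv_factorial (norm_gCoeff_le m) u).hasSum

theorem succ_mul_gCoeff_succ (m : ℤ) (j : ℕ) :
    (j + 1 : ℂ) * gCoeff m (j + 1) = gCoeff (m + 2) j := by
  unfold gCoeff
  rw [show m + 2 * ((j + 1 : ℕ) : ℤ) = m + 2 + 2 * (j : ℤ) by push_cast; ring]
  split_ifs
  · rw [Nat.factorial_succ]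
    push_cast
    field_simp
  · simp

theorem gCoeff_sub_one (m : ℤ) (j : ℕ) : gCoeff (m - 1) j = (m + 2 * j) * gCoeff m j := by
  unfold gCoeff
  rcases lt_trichotomy (m + 2 * (j : ℤ)) 0 with h | h | h
  · rw [if_neg (by omega), if_neg (by omega), mul_zero]
  · rw [if_neg (by omega), show (m : ℂ) + 2 * j = 0 by exact_mod_cast h, zero_mul]
  · obtain ⟨N, hN⟩ : ∃ N : ℕ, m + 2 * (j : ℤ) = N + 1 := ⟨(m + 2 * j - 1).toNat, by omega⟩
    rw [if_pos (by omega), if_pos (by omega), show m - 1 + 2 * (j : ℤ) = N by omega, hN,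
      show (N : ℤ) + 1 = ((N + 1 : ℕ) : ℤ) by push_cast; ring, Int.toNat_natCast,
      Int.toNat_natCast, show (m : ℂ) + 2 * j = N + 1 by exact_mod_cast hN, Nat.factorial_succ]
    push_cast
    field_simp

theorem hasDerivAt_gFun (m : ℤ) (u : ℂ) : HasDerivAt (gFun m) (gFun (m + 2) u) u := by
  have h := hasDerivAt_tsum_mul_pow (norm_gCoeff_le m) u
  simp only [succ_mul_gCoeff_succ, ← gFun_eq_tsum] at h
  exact (funext (gFun_eq_tsum m)) ▸ h

theorem gFun_sub_one (m : ℤ) (u : ℂ) :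
    gFun (m - 1) u = m * gFun m u + 2 * u * gFun (m + 2) u := by
  have hshift : HasSum (fun j : ℕ => j * (gCoeff m j * u ^ j)) (u * gFun (m + 2) u) := by
    refine (hasSum_nat_add_iff' 1).mp ?_
    simpa [← succ_mul_gCoeff_succ, pow_succ, mul_assoc, mul_comm, mul_left_comm] using
      (hasSum_gCoeff_mul_pow (m + 2) u).mul_left u
  have hsum := ((hasSum_gCoeff_mul_pow m u).mul_left (m : ℂ)).add (hshift.mul_left 2)
  rw [← mul_assoc] at hsum
  have hcoeff : (fun j : ℕ => m * (gCoeff m j * u ^ j) + 2 * (j * (gCoeff m j * u ^ j)))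
      = fun j => gCoeff (m - 1) j * u ^ j := by
    funext j
    rw [gCoeff_sub_one]
    ring
  exact (hasSum_gCoeff_mul_pow (m - 1) u).unique (hcoeff ▸ hsum)

end GFun

section DetTrace

variable {n R : Type*} [Fintype n] [DecidableEq n] [CommRing R]

theorem sum_det_updateCol_eq_trace (A B : Matrix n n R) :
    ∑ j, (A.updateCol j fun i => B i j).det = trace (adjugate A * B) := by
  simp only [← cramer_apply, cramer_eq_adjugate_mulVec]
  rfl

theorem sum_det_updateRow_eq_trace (A B : Matrix n n R) :
    ∑ i, (A.updateRow i (B i)).det = trace (adjugate A * B) := by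
  simp only [← cramer_transpose_apply, cramer_eq_adjugate_mulVec, ← adjugate_transpose]
  simp only [trace, diag, mul_apply, mulVec, dotProduct, transpose_apply, mul_comm]
  exact Finset.sum_comm

theorem trace_adjugate_mul_mul_diagonal (A : Matrix n n R) (d : n → R) :
    trace (adjugate A * (A * diagonal d)) = (∑ i, d i) * A.det := by
  rw [← Matrix.mul_assoc, adjugate_mul, smul_mul_assoc, Matrix.one_mul, trace_smul,
    trace_diagonal, smul_eq_mul, mul_comm]

theorem trace_adjugate_mul_diagonal_mul (A : Matrix n n R) (d : n → R) :
    trace (adjugate A * (diagonal d * A)) = (∑ i, d i) * A.det := by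
  rw [trace_mul_comm, Matrix.mul_assoc, mul_adjugate, Matrix.mul_smul, Matrix.mul_one, trace_smul,
    trace_diagonal, smul_eq_mul, mul_comm]

end DetTrace

section Collapse

variable {R : Type*} [CommRing R] {m : ℕ}

theorem trace_adjugate_mul_of_row_eq_succ {A B : Matrix (Fin (m + 1)) (Fin (m + 1)) R}
    (h : ∀ i : Fin m, B i.castSucc = A i.succ) :
    trace (adjugate A * B) = (A.updateRow (Fin.last m) (B (Fin.last m))).det := by
  rw [← sum_det_updateRow_eq_trace, Fin.sum_univ_castSucc, Finset.sum_eq_zero, zero_add]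
  intro i _
  refine det_zero_of_row_eq (Fin.castSucc_lt_succ (i := i)).ne ?_
  rw [updateRow_self, updateRow_ne (Fin.castSucc_lt_succ (i := i)).ne', h]

theorem trace_adjugate_mul_of_col_eq_succ {A B : Matrix (Fin (m + 1)) (Fin (m + 1)) R}
    (h : ∀ i (j : Fin m), B i j.castSucc = A i j.succ) :
    trace (adjugate A * B) = (A.updateCol (Fin.last m) fun i => B i (Fin.last m)).det := by
  rw [← sum_det_updateCol_eq_trace, Fin.sum_univ_castSucc, Finset.sum_eq_zero, zero_add]
  intro j _
  refine det_zero_of_column_eq (Fin.castSucc_lt_succ (i := j)).ne fun i => ?_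
  rw [updateCol_self, updateCol_ne (Fin.castSucc_lt_succ (i := j)).ne', h]

end Collapse

section JacobiFormula

variable {n 𝕜 𝔸 : Type*} [Fintype n] [DecidableEq n] [NontriviallyNormedField 𝕜]
  [NormedCommRing 𝔸] [NormedAlgebra 𝕜 𝔸]

theorem hasDerivAt_det {A : 𝕜 → Matrix n n 𝔸} {A' : Matrix n n 𝔸} {x : 𝕜}
    (h : ∀ i j, HasDerivAt (fun y => A y i j) (A' i j) x) :
    HasDerivAt (fun y => (A y).det) (trace (adjugate (A x) * A')) x := by
  rw [← sum_det_updateCol_eq_trace]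
  simp only [det_apply']
  rw [Finset.sum_comm]
  refine HasDerivAt.fun_sum fun σ _ => ?_
  refine ((HasDerivAt.fun_finsetProd fun i _ => h (σ i) i).const_mul _).congr_deriv ?_
  rw [Finset.mul_sum]
  refine Finset.sum_congr rfl fun j _ => ?_
  rw [← Finset.mul_prod_erase _ _ (Finset.mem_univ j), updateCol_self, smul_eq_mul,
    Finset.prod_congr rfl fun i hi => updateCol_ne (Finset.ne_of_mem_erase hi)]
  ring

end JacobiFormula

section Condensation

variable {ι κ R : Type*} [Fintype ι] [Fintype κ] [DecidableEq ι] [DecidableEq κ] [CommRing R]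

theorem det_toBlocks₂₂_adjugate_mul_det (N : Matrix (ι ⊕ κ) (ι ⊕ κ) R) :
    (adjugate N).toBlocks₂₂.det * N.det = N.toBlocks₁₁.det * N.det ^ Fintype.card κ := by
  have hcol : ∀ s j, ∑ k, N s (.inl k) * adjugate N (.inl k) (.inr j)
      + ∑ k, N s (.inr k) * adjugate N (.inr k) (.inr j)
        = N.det * (1 : Matrix (ι ⊕ κ) (ι ⊕ κ) R) s (.inr j) := by
    intro s j
    rw [← Fintype.sum_sum_type fun k => N s k * adjugate N k (.inr j), ← mul_apply, mul_adjugate,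
      Matrix.smul_apply, smul_eq_mul]
  have hprod : N * fromBlocks 1 (adjugate N).toBlocks₁₂ 0 (adjugate N).toBlocks₂₂
      = fromBlocks N.toBlocks₁₁ 0 N.toBlocks₂₁ (N.det • 1) := by
    ext (i | i) (j | j) <;>
      simp [mul_apply, Fintype.sum_sum_type, one_apply, toBlocks₁₁, toBlocks₁₂, toBlocks₂₁,
        toBlocks₂₂, hcol]
  calc (adjugate N).toBlocks₂₂.det * N.det
      = (N * fromBlocks 1 (adjugate N).toBlocks₁₂ 0 (adjugate N).toBlocks₂₂).det := by
        rw [det_mul, det_fromBlocks_zero₂₁, det_one, one_mul, mul_comm]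
    _ = N.toBlocks₁₁.det * N.det ^ Fintype.card κ := by
        rw [hprod, det_fromBlocks_zero₁₂, det_smul, det_one, mul_one]

open Polynomial in
theorem det_toBlocks₂₂_adjugate [Nonempty κ] (N : Matrix (ι ⊕ κ) (ι ⊕ κ) R) :
    (adjugate N).toBlocks₂₂.det = N.toBlocks₁₁.det * N.det ^ (Fintype.card κ - 1) := by
  -- `N` is the value at `X = 0` of `X + N`, whose determinant is monic, hence cancellable.
  set N' := charmatrix (-N)
  have hreg : IsRegular N'.det := (charpoly_monic (-N)).isRegular
  have hgeneric :
      (adjugate N').toBlocks₂₂.det = N'.toBlocks₁₁.det * N'.det ^ (Fintype.card κ - 1) := by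
    refine hreg.right ?_
    simp only
    rw [det_toBlocks₂₂_adjugate_mul_det, mul_assoc, ← pow_succ,
      Nat.sub_add_cancel Fintype.card_pos]
  have heval : (evalRingHom 0).mapMatrix N' = N := by
    ext i j
    by_cases h : i = j
    · subst h
      simp [N', charmatrix_apply_eq]
    · simp [N', charmatrix_apply_ne _ _ _ h]
  have := congrArg (evalRingHom 0) hgeneric
  rw [RingHom.map_det, RingHom.map_mul, RingHom.map_det, RingHom.map_pow, RingHom.map_det] at this
  change ((evalRingHom 0).mapMatrix (adjugate N')).toBlocks₂₂.det
    = ((evalRingHom 0).mapMatrix N').toBlocks₁₁.det * _ at this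
  rwa [RingHom.map_adjugate, heval] at this

end Condensation

section DesnanotJacobi

variable {R : Type*} [CommRing R]

theorem desnanot_jacobi {n : ℕ} (M : Matrix (Fin (n + 2)) (Fin (n + 2)) R) :
    (M.submatrix (Fin.last n).castSucc.succAbove (Fin.last n).castSucc.succAbove).det
        * (M.submatrix Fin.castSucc Fin.castSucc).det
      - (M.submatrix (Fin.last n).castSucc.succAbove Fin.castSucc).det
        * (M.submatrix Fin.castSucc (Fin.last n).castSucc.succAbove).det
      = M.det * (M.submatrix (Fin.castAdd 2) (Fin.castAdd 2)).det := by
  have h := det_toBlocks₂₂_adjugate (M.submatrix finSumFinEquiv finSumFinEquiv)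
  rw [adjugate_submatrix_equiv_self, det_submatrix_equiv_self, det_fin_two] at h
  have h0 : finSumFinEquiv (.inr 0 : Fin n ⊕ Fin 2) = (Fin.last n).castSucc := by ext; simp
  have h1 : finSumFinEquiv (.inr 1 : Fin n ⊕ Fin 2) = Fin.last (n + 1) := by ext; simp
  simp only [toBlocks₂₂, of_apply, submatrix_apply, h0, h1, adjugate_fin_succ_eq_det_submatrix,
    Fin.succAbove_last, Fin.val_castSucc, Fin.val_last] at h
  have heven : ∀ a : ℕ, (-1 : R) ^ (a + a) = 1 := fun a => Even.neg_one_pow ⟨a, rfl⟩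
  rw [heven, heven, Odd.neg_one_pow ⟨n, by ring⟩, Odd.neg_one_pow ⟨n, by ring⟩] at h
  have hinterior : (M.submatrix finSumFinEquiv finSumFinEquiv).toBlocks₁₁
      = M.submatrix (Fin.castAdd 2) (Fin.castAdd 2) := rfl
  rw [hinterior, Fintype.card_fin, pow_one] at h
  linear_combination h

end DesnanotJacobi

section GMatrix

noncomputable def gMatrix {ι : Type*} (ℓ : ℤ) (r c : ι → ℤ) (u : ℂ) : Matrix ι ι ℂ :=
  of fun i j => gFun (2 * r i - c j + 1 + ℓ) u

theorem submatrix_gMatrix {ι κ : Type*} (ℓ : ℤ) (r c : ι → ℤ) (f g : κ → ι) (u : ℂ) :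
    (gMatrix ℓ r c u).submatrix f g = gMatrix ℓ (r ∘ f) (c ∘ g) u :=
  rfl

variable {ι : Type*} [Fintype ι] [DecidableEq ι] (ℓ : ℤ) (r c : ι → ℤ)

noncomputable def labelWeight : ℂ :=
  ∑ i, (2 * r i : ℂ) + ∑ j, (1 + ℓ - c j : ℂ)

theorem hasDerivAt_det_gMatrix (u : ℂ) :
    HasDerivAt (fun z => (gMatrix ℓ r c z).det)
      (trace (adjugate (gMatrix ℓ r c u) * gMatrix ℓ (r + 1) c u)) u :=
  hasDerivAt_det fun i j => by
    have h := hasDerivAt_gFun (2 * r i - c j + 1 + ℓ) u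
    rwa [show 2 * r i - c j + 1 + ℓ + 2 = 2 * (r i + 1) - c j + 1 + ℓ by ring] at h

theorem gMatrix_add_one_right (u : ℂ) :
    gMatrix ℓ r (c + 1) u = gMatrix ℓ r c u * diagonal (fun j => (1 + ℓ - c j : ℂ))
      + diagonal (fun i => (2 * r i : ℂ)) * gMatrix ℓ r c u + (2 * u) • gMatrix ℓ (r + 1) c u := by
  ext i j
  have h := gFun_sub_one (2 * r i - c j + 1 + ℓ) u
  simp only [gMatrix, Matrix.add_apply, mul_diagonal, diagonal_mul, Matrix.smul_apply, of_apply,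
    Pi.add_apply, Pi.one_apply, smul_eq_mul] at h ⊢
  rw [show 2 * r i - (c j + 1) + 1 + ℓ = 2 * r i - c j + 1 + ℓ - 1 by ring, h,
    show 2 * r i - c j + 1 + ℓ + 2 = 2 * (r i + 1) - c j + 1 + ℓ by ring]
  push_cast
  ring

theorem trace_adjugate_mul_gMatrix_add_one_right (u : ℂ) :
    trace (adjugate (gMatrix ℓ r c u) * gMatrix ℓ r (c + 1) u)
      = labelWeight ℓ r c * (gMatrix ℓ r c u).det
        + 2 * u * trace (adjugate (gMatrix ℓ r c u) * gMatrix ℓ (r + 1) c u) := by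
  rw [gMatrix_add_one_right, Matrix.mul_add, Matrix.mul_add, trace_add, trace_add,
    trace_adjugate_mul_mul_diagonal, trace_adjugate_mul_diagonal_mul, Matrix.mul_smul, trace_smul,
    smul_eq_mul, labelWeight]
  ring

end GMatrix

def bumpLast (m : ℕ) : Fin (m + 1) → ℤ :=
  Function.update (↑) (Fin.last m) (m + 1)

theorem tauT_eq_det_gMatrix (k : ℕ) (ℓ : ℤ) (u : ℂ) :
    tauT k ℓ u = (gMatrix ℓ ((↑) : Fin k → ℤ) (↑) u).det :=
  rfl

theorem coe_comp_succAbove_castSucc_last (m : ℕ) :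
    ((↑) : Fin (m + 2) → ℤ) ∘ (Fin.last m).castSucc.succAbove = bumpLast m := by
  funext i
  rcases Fin.eq_castSucc_or_eq_last i with ⟨i, rfl⟩ | rfl
  · rw [Function.comp_apply,
      Fin.succAbove_of_castSucc_lt _ _ (by simp [Fin.castSucc_lt_castSucc_iff]), bumpLast,
      Function.update_of_ne (Fin.castSucc_lt_last i).ne]
    rfl
  · simp [bumpLast]

section TauMatrix

variable (ℓ : ℤ) {m : ℕ}

theorem trace_adjugate_gMatrix_mul_gMatrix_add_one_left (c : Fin (m + 1) → ℤ) (u : ℂ) :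
    trace (adjugate (gMatrix ℓ (↑) c u) * gMatrix ℓ ((↑) + 1) c u)
      = (gMatrix ℓ (bumpLast m) c u).det := by
  rw [trace_adjugate_mul_of_row_eq_succ]
  · congr 1
    ext i j
    rcases Fin.eq_castSucc_or_eq_last i with ⟨i, rfl⟩ | rfl
    · simp [gMatrix, bumpLast, (Fin.castSucc_lt_last i).ne]
    · simp [gMatrix, bumpLast]
  · intro i
    funext j
    simp only [gMatrix, of_apply, Pi.add_apply, Pi.one_apply, Fin.val_succ, Fin.val_castSucc]
    push_cast
    ring_nf

theorem hasDerivAt_det_gMatrix_coe_left (c : Fin (m + 1) → ℤ) (u : ℂ) :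
    HasDerivAt (fun z => (gMatrix ℓ (↑) c z).det) (gMatrix ℓ (bumpLast m) c u).det u := by
  simpa only [trace_adjugate_gMatrix_mul_gMatrix_add_one_left] using
    hasDerivAt_det_gMatrix ℓ (↑) c u

theorem det_gMatrix_coe_bumpLast (u : ℂ) :
    (gMatrix ℓ (↑) (bumpLast m) u).det
      = labelWeight ℓ ((↑) : Fin (m + 1) → ℤ) (↑)
          * (gMatrix ℓ ((↑) : Fin (m + 1) → ℤ) (↑) u).det
        + 2 * u * (gMatrix ℓ (bumpLast m) (↑) u).det := by
  rw [← trace_adjugate_gMatrix_mul_gMatrix_add_one_left,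
    ← trace_adjugate_mul_gMatrix_add_one_right, trace_adjugate_mul_of_col_eq_succ]
  · congr 1
    ext i j
    rcases Fin.eq_castSucc_or_eq_last j with ⟨j, rfl⟩ | rfl
    · simp [gMatrix, bumpLast, (Fin.castSucc_lt_last j).ne]
    · simp [gMatrix, bumpLast]
  · intro i j
    simp only [gMatrix, of_apply, Pi.add_apply, Pi.one_apply, Fin.val_succ, Fin.val_castSucc]
    push_cast
    ring_nf

theorem det_gMatrix_bumpLast_bumpLast (u : ℂ) :
    (gMatrix ℓ (bumpLast m) (bumpLast m) u).det
      = (labelWeight ℓ ((↑) : Fin (m + 1) → ℤ) (↑) + 2) * (gMatrix ℓ (bumpLast m) (↑) u).det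
        + 2 * u * deriv (fun z => (gMatrix ℓ (bumpLast m) (↑) z).det) u := by
  have hQ := hasDerivAt_det_gMatrix_coe_left ℓ (bumpLast m) u
  rw [funext (det_gMatrix_coe_bumpLast ℓ)] at hQ
  have hR := (hasDerivAt_det_gMatrix ℓ (bumpLast m) (↑) u).differentiableAt.hasDerivAt
  have hsum := ((hasDerivAt_det_gMatrix_coe_left (m := m) ℓ (↑) u).const_mul
    (labelWeight ℓ ((↑) : Fin (m + 1) → ℤ) (↑))).fun_add
    (((hasDerivAt_id' u).const_mul 2).fun_mul hR)
  rw [hQ.unique hsum]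
  ring

end TauMatrix

theorem hasDerivAt_tauT (ℓ : ℤ) (m : ℕ) (u : ℂ) :
    HasDerivAt (tauT (m + 1) ℓ) (gMatrix ℓ (bumpLast m) (↑) u).det u :=
  hasDerivAt_det_gMatrix_coe_left (m := m) ℓ (↑) u

/-- **Main recurrence.** For every integer `k ≥ 1`, `ℓ ∈ ℤ` and all `u ∈ ℂ`:
`T_{k+1,ℓ}(u) T_{k−1,ℓ}(u)
  = 2( u T_{k,ℓ}(u) T_{k,ℓ}''(u) + T_{k,ℓ}(u) T_{k,ℓ}'(u) − u (T_{k,ℓ}'(u))² )`. -/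
theorem tauT_recurrence (k : ℕ) (hk : 1 ≤ k) (ℓ : ℤ) (u : ℂ) :
    tauT (k + 1) ℓ u * tauT (k - 1) ℓ u
      = 2 * (u * tauT k ℓ u * deriv (deriv (tauT k ℓ)) u
          + tauT k ℓ u * deriv (tauT k ℓ) u
          - u * (deriv (tauT k ℓ) u) ^ 2) := by
  obtain ⟨m, rfl⟩ : ∃ m, k = m + 1 := ⟨k - 1, by omega⟩
  have hderiv : deriv (tauT (m + 1) ℓ) = fun z => (gMatrix ℓ (bumpLast m) (↑) z).det :=
    funext fun z => (hasDerivAt_tauT ℓ m z).deriv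
  have hcondensation := desnanot_jacobi (gMatrix ℓ ((↑) : Fin (m + 2) → ℤ) (↑) u)
  rw [submatrix_gMatrix, submatrix_gMatrix, submatrix_gMatrix, submatrix_gMatrix,
    submatrix_gMatrix, coe_comp_succAbove_castSucc_last] at hcondensation
  simp only [Function.comp_def, Fin.val_castSucc, Fin.val_castAdd] at hcondensation
  simp only [hderiv, Nat.add_sub_cancel, tauT_eq_det_gMatrix]
  rw [← hcondensation, det_gMatrix_bumpLast_bumpLast, det_gMatrix_coe_bumpLast]
  ring
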